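/- arXiv:1707.09186 — 6 statements merged into one kernel-verified Lean document; each statement's English description precedes it below -/
import Mathlib

section
/- For every N ≥ 1, the Boolean radius of the class of all real functions on {-1,1}^N equals 2^{1/N} − 1. That is, (i) for every f: {-1,1}^N → ℝ one has ∑_{S⊆[N]} |f̂(S)| (2^{1/N}−1)^{|S|} ≤ ‖f‖_∞, and (ii) there exists a function f with ‖f‖_∞ = 1 for which ∑_{S⊆[N]} |f̂(S)| ρ^{|S|} > 1 whenever ρ > 2^{1/N}−1. -/
/-!
For a nonempty `S`, the functions `1 ± χ_S` are nonnegative with mean one, so testing `f` against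
them gives `|f̂(∅)| + |f̂(S)| ≤ ‖f‖_∞`. Hence every nonconstant coefficient is at most
`‖f‖_∞ - |f̂(∅)|`, and since `∑_{S ≠ ∅} ρ^{|S|} = (1 + ρ)^N - 1`, the inequality holds as soon as
`(1 + ρ)^N ≤ 2`, i.e. `ρ ≤ 2^{1/N} - 1`. Conversely, the function equal to `1` at the all-ones
point and `-1` elsewhere has `∑_S |f̂(S)| ρ^{|S|} = 1 + 2((1 + ρ)^N - 2) / 2^N`, which exceeds
`1` exactly when `(1 + ρ)^N > 2`.
-/

def cubeChi (b : Bool) : ℝ := if b then 1 else -1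

noncomputable def wCoeff {N : ℕ} (f : (Fin N → Bool) → ℝ) (S : Finset (Fin N)) : ℝ :=
  (∑ x : Fin N → Bool, f x * ∏ i ∈ S, cubeChi (x i)) / 2 ^ N

noncomputable def cubeSup {N : ℕ} (f : (Fin N → Bool) → ℝ) : ℝ :=
  Finset.univ.sup' Finset.univ_nonempty (fun x => |f x|)

noncomputable def cubeAvg {N : ℕ} (f : (Fin N → Bool) → ℝ) : ℝ :=
  (∑ x : Fin N → Bool, f x) / 2 ^ N

open Finset

namespace BooleanRadius

variable {N : ℕ}

def walsh (S : Finset (Fin N)) (x : Fin N → Bool) : ℝ := ∏ i ∈ S, cubeChi (x i)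

lemma wCoeff_eq_cubeAvg (f : (Fin N → Bool) → ℝ) (S : Finset (Fin N)) :
    wCoeff f S = cubeAvg (fun x => f x * walsh S x) := rfl

lemma abs_walsh (S : Finset (Fin N)) (x : Fin N → Bool) : |walsh S x| = 1 := by
  rw [walsh, abs_prod]
  exact prod_eq_one fun i _ => by cases x i <;> simp [cubeChi]

lemma sum_walsh_of_nonempty {S : Finset (Fin N)} (hS : S.Nonempty) :
    ∑ x, walsh S x = 0 := by
  obtain ⟨j, hj⟩ := hS
  have hprod : ∀ x : Fin N → Bool,
      walsh S x = ∏ i, if i ∈ S then cubeChi (x i) else 1 := fun x =>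
    (Fintype.prod_ite_mem S fun i => cubeChi (x i)).symm
  simp_rw [hprod]
  rw [← Fintype.prod_sum fun i b => if i ∈ S then cubeChi b else 1]
  exact prod_eq_zero (mem_univ j) (by simp [hj, cubeChi])

lemma cubeAvg_const (c : ℝ) : cubeAvg (fun _ : Fin N → Bool => c) = c := by
  simp [cubeAvg]

lemma cubeAvg_add (f g : (Fin N → Bool) → ℝ) :
    cubeAvg (fun x => f x + g x) = cubeAvg f + cubeAvg g := by
  simp only [cubeAvg, sum_add_distrib, add_div]

lemma cubeAvg_const_mul (c : ℝ) (f : (Fin N → Bool) → ℝ) :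
    cubeAvg (fun x => c * f x) = c * cubeAvg f := by
  simp only [cubeAvg, ← mul_sum, mul_div_assoc]

lemma abs_le_cubeSup (f : (Fin N → Bool) → ℝ) (x : Fin N → Bool) : |f x| ≤ cubeSup f :=
  le_sup' (fun y => |f y|) (mem_univ x)

lemma abs_cubeAvg_mul_le (f : (Fin N → Bool) → ℝ) {g : (Fin N → Bool) → ℝ}
    (hg : ∀ x, 0 ≤ g x) : |cubeAvg (fun x => f x * g x)| ≤ cubeSup f * cubeAvg g := by
  rw [cubeAvg, cubeAvg, abs_div, abs_of_pos (by positivity : (0 : ℝ) < 2 ^ N), mul_div_assoc',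
    mul_sum]
  gcongr ?_ / _
  refine (abs_sum_le_sum_abs _ _).trans (sum_le_sum fun x _ => ?_)
  rw [abs_mul, abs_of_nonneg (hg x)]
  exact mul_le_mul_of_nonneg_right (abs_le_cubeSup f x) (hg x)

lemma abs_wCoeff_empty_le (f : (Fin N → Bool) → ℝ) : |wCoeff f ∅| ≤ cubeSup f := by
  simpa [wCoeff_eq_cubeAvg, walsh, cubeAvg_const] using
    abs_cubeAvg_mul_le f (g := fun _ => 1) fun _ => zero_le_one

lemma abs_wCoeff_empty_add_mul_le (f : (Fin N → Bool) → ℝ) {S : Finset (Fin N)}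
    (hS : S.Nonempty) {c : ℝ} (hc : |c| = 1) :
    |wCoeff f ∅ + c * wCoeff f S| ≤ cubeSup f := by
  have hg : ∀ x, 0 ≤ 1 + c * walsh S x := fun x => by
    have := neg_abs_le (c * walsh S x)
    rw [abs_mul, hc, abs_walsh, one_mul] at this
    linarith
  have hmean : cubeAvg (fun x => 1 + c * walsh S x) = 1 := by
    rw [cubeAvg_add (fun _ => 1) (fun x => c * walsh S x), cubeAvg_const_mul, cubeAvg_const,
      cubeAvg, sum_walsh_of_nonempty hS, zero_div, mul_zero, add_zero]
  have hsplit : wCoeff f ∅ + c * wCoeff f S = cubeAvg (fun x => f x * (1 + c * walsh S x)) := by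
    simp only [mul_add, mul_one, mul_left_comm _ c, cubeAvg_add, cubeAvg_const_mul,
      wCoeff_eq_cubeAvg, walsh, prod_empty]
  simpa [hsplit, hmean] using abs_cubeAvg_mul_le f hg

lemma abs_wCoeff_empty_add_abs_wCoeff_le (f : (Fin N → Bool) → ℝ) {S : Finset (Fin N)}
    (hS : S.Nonempty) : |wCoeff f ∅| + |wCoeff f S| ≤ cubeSup f := by
  have hplus := abs_le.1 (abs_wCoeff_empty_add_mul_le f hS (c := 1) (by simp))
  have hminus := abs_le.1 (abs_wCoeff_empty_add_mul_le f hS (c := -1) (by simp))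
  rcases abs_cases (wCoeff f ∅) with ⟨h₀, -⟩ | ⟨h₀, -⟩ <;>
    rcases abs_cases (wCoeff f S) with ⟨h₁, -⟩ | ⟨h₁, -⟩ <;> linarith

lemma sum_pow_card (ρ : ℝ) : ∑ S : Finset (Fin N), ρ ^ S.card = (1 + ρ) ^ N := by
  simpa [add_comm] using sum_pow_mul_eq_add_pow ρ 1 (univ : Finset (Fin N))

lemma sum_abs_wCoeff_mul_pow_le (f : (Fin N → Bool) → ℝ) {ρ : ℝ} (hρ : 0 ≤ ρ)
    (h2 : (1 + ρ) ^ N ≤ 2) :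
    ∑ S : Finset (Fin N), |wCoeff f S| * ρ ^ S.card ≤ cubeSup f := by
  set a := |wCoeff f ∅|
  have ha : a ≤ cubeSup f := abs_wCoeff_empty_le f
  have hgeom : ∑ S ∈ univ.erase (∅ : Finset (Fin N)), ρ ^ S.card = (1 + ρ) ^ N - 1 := by
    rw [← sum_pow_card, ← add_sum_erase _ _ (mem_univ ∅)]
    simp
  have hterm : ∀ S ∈ univ.erase (∅ : Finset (Fin N)),
      |wCoeff f S| ≤ cubeSup f - a := fun S hS => by
    have := abs_wCoeff_empty_add_abs_wCoeff_le f (nonempty_iff_ne_empty.2 (mem_erase.1 hS).1)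
    linarith
  calc ∑ S : Finset (Fin N), |wCoeff f S| * ρ ^ S.card
      = a + ∑ S ∈ univ.erase ∅, |wCoeff f S| * ρ ^ S.card := by
        rw [← add_sum_erase _ _ (mem_univ ∅)]
        simp [a]
    _ ≤ a + (cubeSup f - a) * ((1 + ρ) ^ N - 1) := by
        rw [← hgeom, mul_sum]
        gcongr with S hS
        exact hterm S hS
    _ ≤ cubeSup f := by nlinarith

def spike : (Fin N → Bool) → ℝ := fun x => if x = fun _ => true then 1 else -1

lemma cubeSup_spike : cubeSup (spike (N := N)) = 1 := by
  have : (fun x => |spike (N := N) x|) = fun _ => 1 := by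
    funext x
    unfold spike
    split <;> simp
  rw [cubeSup, this, sup'_const]

lemma wCoeff_spike (S : Finset (Fin N)) :
    wCoeff spike S = 2 / 2 ^ N - if S = ∅ then 1 else 0 := by
  have hspike : ∀ x : Fin N → Bool,
      spike x * walsh S x = 2 * (if x = fun _ => true then walsh S x else 0) - walsh S x :=
    fun x => by unfold spike; split <;> ring
  rw [wCoeff_eq_cubeAvg, cubeAvg]
  simp_rw [hspike, sum_sub_distrib, ← mul_sum, sum_ite_eq', if_pos (mem_univ _)]
  have hone : walsh S (fun _ => true) = 1 := by simp [walsh, cubeChi]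
  rcases S.eq_empty_or_nonempty with rfl | hS
  · simp [walsh, card_univ, sub_div]
  · simp [hone, sum_walsh_of_nonempty hS, hS.ne_empty]

lemma sum_abs_wCoeff_spike_mul_pow (hN : 1 ≤ N) (ρ : ℝ) :
    ∑ S : Finset (Fin N), |wCoeff spike S| * ρ ^ S.card
      = 1 + 2 * ((1 + ρ) ^ N - 2) / 2 ^ N := by
  have h2N : (2 : ℝ) ≤ 2 ^ N := by simpa using pow_le_pow_right₀ one_le_two hN
  have habs : ∀ S : Finset (Fin N),
      |wCoeff spike S| = 2 / 2 ^ N + if S = ∅ then 1 - 4 / 2 ^ N else 0 := fun S => by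
    rw [wCoeff_spike]
    split_ifs
    · rw [abs_of_nonpos (sub_nonpos.2 ((div_le_one (by positivity)).2 h2N))]
      ring
    · simp [abs_of_pos]
  simp_rw [habs, add_mul, sum_add_distrib, ← mul_sum, sum_pow_card, ite_mul, zero_mul,
    sum_ite_eq', if_pos (mem_univ _), card_empty, pow_zero]
  field_simp
  ring

end BooleanRadius

open BooleanRadius in
theorem stmt1 {N : ℕ} (hN : 1 ≤ N) :
    (∀ f : (Fin N → Bool) → ℝ,
      ∑ S : Finset (Fin N),
        |wCoeff f S| * ((2 : ℝ) ^ ((1 : ℝ) / N) - 1) ^ S.card ≤ cubeSup f) ∧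
    (∃ f : (Fin N → Bool) → ℝ, cubeSup f = 1 ∧
      ∀ ρ : ℝ, (2 : ℝ) ^ ((1 : ℝ) / N) - 1 < ρ →
        1 < ∑ S : Finset (Fin N), |wCoeff f S| * ρ ^ S.card) := by
  have hroot : (1 + ((2 : ℝ) ^ ((1 : ℝ) / N) - 1)) ^ N = 2 := by
    rw [add_sub_cancel, one_div, Real.rpow_inv_natCast_pow zero_le_two (by omega)]
  have hε : 0 ≤ (2 : ℝ) ^ ((1 : ℝ) / N) - 1 :=
    sub_nonneg.2 (Real.one_le_rpow one_le_two (by positivity))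
  refine ⟨fun f => sum_abs_wCoeff_mul_pow_le f hε hroot.le, spike, cubeSup_spike,
    fun ρ hρ => ?_⟩
  have hpow : 2 < (1 + ρ) ^ N :=
    hroot ▸ pow_lt_pow_left₀ (by linarith) (by linarith) (by omega)
  rw [sum_abs_wCoeff_spike_mul_pow hN]
  have : 0 < 2 * ((1 + ρ) ^ N - 2) / 2 ^ N := by
    apply div_pos <;> [linarith; positivity]
  linarith
end

section
/- For every f: {-1,1}^N → ℝ with ‖f‖_∞ ≤ 1, one has ∑_{S⊆[N]} |f̂(S)| ρ^{|S|} ≤ |f̂(∅)| + (1 − |f̂(∅)|)((1+ρ)^N − 1) for all ρ > 0; in particular, taking ρ = 2^{1/N} − 1 gives ∑_{S⊆[N]} |f̂(S)| (2^{1/N}−1)^{|S|} ≤ 1. -/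
lemma abs_cubeChi (b : Bool) : |cubeChi b| = 1 := by
  cases b <;> simp [cubeChi]

lemma sum_prod_cubeChi_eq_zero {ι : Type*} [Fintype ι] [DecidableEq ι] {S : Finset ι}
    (hS : S.Nonempty) : ∑ x : ι → Bool, ∏ i ∈ S, cubeChi (x i) = 0 := by
  obtain ⟨i₀, hi₀⟩ := hS
  simp_rw [← Fintype.prod_ite_mem S]
  rw [← Fintype.prod_sum (fun i b => if i ∈ S then cubeChi b else 1)]
  exact Finset.prod_eq_zero (Finset.mem_univ i₀) (by simp [hi₀, cubeChi])

lemma abs_sum_mul_le_sum_of_abs_le_one {α : Type*} (s : Finset α) {f w : α → ℝ}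
    (hf : ∀ x ∈ s, |f x| ≤ 1) (hw : ∀ x ∈ s, 0 ≤ w x) :
    |∑ x ∈ s, f x * w x| ≤ ∑ x ∈ s, w x := by
  refine (Finset.abs_sum_le_sum_abs _ _).trans (Finset.sum_le_sum fun x hx => ?_)
  rw [abs_mul, abs_of_nonneg (hw x hx)]
  exact mul_le_of_le_one_left (hw x hx) (hf x hx)

lemma abs_add_abs_le_one_of_abs_add_le_of_abs_sub_le {a b : ℝ} (h₁ : |a + b| ≤ 1)
    (h₂ : |a - b| ≤ 1) : |a| + |b| ≤ 1 := by
  rw [abs_le] at h₁ h₂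
  cases abs_cases a <;> cases abs_cases b <;> linarith

lemma sum_pow_card_eq {N : ℕ} (ρ : ℝ) : ∑ S : Finset (Fin N), ρ ^ S.card = (1 + ρ) ^ N := by
  simpa [add_comm] using Fin.sum_pow_mul_eq_add_pow ρ (1 : ℝ)

lemma abs_le_of_cubeSup_le_one {N : ℕ} {f : (Fin N → Bool) → ℝ} (hf : cubeSup f ≤ 1)
    (x : Fin N → Bool) : |f x| ≤ 1 :=
  (Finset.le_sup' (fun x => |f x|) (Finset.mem_univ x)).trans hf

section
variable {N : ℕ} {f : (Fin N → Bool) → ℝ}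

lemma wCoeff_empty_add_mul_wCoeff (f : (Fin N → Bool) → ℝ) (S : Finset (Fin N)) (c : ℝ) :
    wCoeff f ∅ + c * wCoeff f S =
      (∑ x, f x * (1 + c * ∏ i ∈ S, cubeChi (x i))) / 2 ^ N := by
  simp only [wCoeff, Finset.prod_empty, mul_one]
  rw [← mul_div_assoc, ← add_div, Finset.mul_sum, ← Finset.sum_add_distrib]
  exact congrArg (· / _) (Finset.sum_congr rfl fun x _ => by ring)

lemma abs_wCoeff_empty_le_one (hf : ∀ x, |f x| ≤ 1) : |wCoeff f ∅| ≤ 1 := by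
  have h := abs_sum_mul_le_sum_of_abs_le_one Finset.univ (fun x _ => hf x)
    (fun x _ => zero_le_one (α := ℝ))
  have h2 : (0 : ℝ) < 2 ^ N := by positivity
  simp only [wCoeff, Finset.prod_empty]
  rw [abs_div, abs_of_pos h2, div_le_one h2]
  simpa using h

lemma abs_wCoeff_empty_add_mul_le_one (hf : ∀ x, |f x| ≤ 1) {S : Finset (Fin N)}
    (hS : S.Nonempty) {c : ℝ} (hc : |c| ≤ 1) : |wCoeff f ∅ + c * wCoeff f S| ≤ 1 := by
  have hweight : ∀ x : Fin N → Bool, 0 ≤ 1 + c * ∏ i ∈ S, cubeChi (x i) := fun x => by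
    have : |c * ∏ i ∈ S, cubeChi (x i)| ≤ 1 := by
      simpa [abs_mul, Finset.abs_prod, abs_cubeChi] using hc
    linarith [neg_abs_le (c * ∏ i ∈ S, cubeChi (x i))]
  have hmass : ∑ x : Fin N → Bool, (1 + c * ∏ i ∈ S, cubeChi (x i)) = 2 ^ N := by
    simp [Finset.sum_add_distrib, ← Finset.mul_sum, sum_prod_cubeChi_eq_zero hS]
  have h2 : (0 : ℝ) < 2 ^ N := by positivity
  rw [wCoeff_empty_add_mul_wCoeff, abs_div, abs_of_pos h2, div_le_one h2, ← hmass]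
  exact abs_sum_mul_le_sum_of_abs_le_one _ (fun x _ => hf x) (fun x _ => hweight x)

lemma abs_wCoeff_empty_add_abs_wCoeff_le_one (hf : ∀ x, |f x| ≤ 1) {S : Finset (Fin N)}
    (hS : S.Nonempty) : |wCoeff f ∅| + |wCoeff f S| ≤ 1 :=
  abs_add_abs_le_one_of_abs_add_le_of_abs_sub_le
    (by simpa using abs_wCoeff_empty_add_mul_le_one hf hS (c := 1) (by simp))
    (by simpa [sub_eq_add_neg] using abs_wCoeff_empty_add_mul_le_one hf hS (c := -1) (by simp))

lemma sum_abs_wCoeff_mul_pow_le (hf : ∀ x, |f x| ≤ 1) {ρ : ℝ} (hρ : 0 ≤ ρ) :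
    ∑ S : Finset (Fin N), |wCoeff f S| * ρ ^ S.card ≤
      |wCoeff f ∅| + (1 - |wCoeff f ∅|) * ((1 + ρ) ^ N - 1) := by
  have hsplit (g : Finset (Fin N) → ℝ) : ∑ S, g S = g ∅ + ∑ S ∈ Finset.univ.erase ∅, g S :=
    (Finset.add_sum_erase _ _ (Finset.mem_univ _)).symm
  have hrest : ∑ S ∈ Finset.univ.erase (∅ : Finset (Fin N)), ρ ^ S.card = (1 + ρ) ^ N - 1 := by
    have := hsplit fun S => ρ ^ S.card
    rw [sum_pow_card_eq, Finset.card_empty, pow_zero] at this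
    linarith
  rw [hsplit, ← hrest, Finset.mul_sum, Finset.card_empty, pow_zero, mul_one]
  gcongr with S hS
  exact le_sub_iff_add_le'.mpr <| abs_wCoeff_empty_add_abs_wCoeff_le_one hf <|
    Finset.nonempty_iff_ne_empty.mpr (Finset.ne_of_mem_erase hS)

end

theorem stmt2_general {N : ℕ} (f : (Fin N → Bool) → ℝ) (hf : cubeSup f ≤ 1) :
    (∀ ρ : ℝ, 0 < ρ →
      ∑ S : Finset (Fin N), |wCoeff f S| * ρ ^ S.card ≤
        |wCoeff f ∅| + (1 - |wCoeff f ∅|) * ((1 + ρ) ^ N - 1)) ∧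
    ∑ S : Finset (Fin N),
      |wCoeff f S| * ((2 : ℝ) ^ ((1 : ℝ) / N) - 1) ^ S.card ≤ 1 := by
  have hbound := abs_le_of_cubeSup_le_one hf
  refine ⟨fun ρ hρ => sum_abs_wCoeff_mul_pow_le hbound hρ.le, ?_⟩
  set ρ : ℝ := (2 : ℝ) ^ ((1 : ℝ) / N) - 1
  have hρ : 0 ≤ ρ := sub_nonneg.mpr (Real.one_le_rpow one_le_two (by positivity))
  have hpow : (1 + ρ) ^ N ≤ 2 :=
    calc (1 + ρ) ^ N = (2 : ℝ) ^ ((1 : ℝ) / N * N) := by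
          rw [add_sub_cancel, ← Real.rpow_natCast, ← Real.rpow_mul zero_le_two]
      _ ≤ (2 : ℝ) ^ (1 : ℝ) :=
          Real.rpow_le_rpow_of_exponent_le one_le_two (by simpa using inv_mul_le_one (a := (N : ℝ)))
      _ = 2 := Real.rpow_one 2
  have h₀ := abs_wCoeff_empty_le_one hbound
  calc _ ≤ |wCoeff f ∅| + (1 - |wCoeff f ∅|) * ((1 + ρ) ^ N - 1) :=
        sum_abs_wCoeff_mul_pow_le hbound hρ
    _ ≤ 1 := by nlinarith

theorem stmt2 {N : ℕ} (hN : 1 ≤ N) (f : (Fin N → Bool) → ℝ) (hf : cubeSup f ≤ 1) :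
    (∀ ρ : ℝ, 0 < ρ →
      ∑ S : Finset (Fin N), |wCoeff f S| * ρ ^ S.card ≤
        |wCoeff f ∅| + (1 - |wCoeff f ∅|) * ((1 + ρ) ^ N - 1)) ∧
    ∑ S : Finset (Fin N),
      |wCoeff f S| * ((2 : ℝ) ^ ((1 : ℝ) / N) - 1) ^ S.card ≤ 1 :=
  stmt2_general f hf
end

section
/- For each p > 1 and γ > 0 there exist N and a function f: {-1,1}^N → {-1,1} such that (E[|f(x) − E[f]|^p])^{1/p} > γ(1 − |E[f]|); i.e., the Carathéodory-type inequality fails in L^p for any p > 1 with a uniform constant. -/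
/-! The counterexample is the function equal to `-1` at a single point of the cube and `1`
elsewhere. With `ε = 2⁻ᴺ` its mean is `1 - 2ε`, so `1 - |E f| = 2ε`, while its deviation at the
exceptional point is at least `1`, so the `L^p` norm of `f - E f` is at least `ε^(1/p)`.
For `p > 1` the ratio `ε^(1/p) / ε` is unbounded as `ε → 0`. -/

open Filter Topology

lemma eventually_mul_lt_rpow_nhdsGT_zero {s : ℝ} (hs : s < 1) (C : ℝ) :
    ∀ᶠ ε in 𝓝[>] (0 : ℝ), C * ε < ε ^ s := by
  filter_upwards [(tendsto_rpow_neg_nhdsGT_zero (sub_neg.2 hs)).eventually_gt_atTop C,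
    self_mem_nhdsWithin] with ε hC (hε : 0 < ε)
  rwa [Real.rpow_sub_one hε.ne', lt_div_iff₀ hε] at hC

lemma tendsto_inv_two_pow_nhdsGT_zero :
    Tendsto (fun N : ℕ => ((2 : ℝ) ^ N)⁻¹) atTop (𝓝[>] 0) :=
  tendsto_inv_atTop_nhdsGT_zero.comp (tendsto_pow_atTop_atTop_of_one_lt one_lt_two)

section Cube

variable {N : ℕ}

lemma cubeAvg_ite_eq (x₀ : Fin N → Bool) (a b : ℝ) :
    cubeAvg (fun x => if x = x₀ then a else b) = b + (a - b) / 2 ^ N := by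
  have hsplit : ∀ x : Fin N → Bool,
      (if x = x₀ then a else b) = b + if x = x₀ then a - b else 0 := by
    intro x; split_ifs <;> ring
  rw [cubeAvg, Finset.sum_congr rfl fun x _ => hsplit x, Finset.sum_add_distrib,
    Finset.sum_ite_eq']
  simp only [Finset.sum_const, Finset.card_univ, Fintype.card_fun, Fintype.card_fin,
    Fintype.card_bool, nsmul_eq_mul, Finset.mem_univ, if_true, Nat.cast_pow, Nat.cast_ofNat]
  field_simp

lemma div_two_pow_le_cubeAvg {g : (Fin N → Bool) → ℝ} (hg : ∀ x, 0 ≤ g x) (x₀ : Fin N → Bool) :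
    g x₀ / 2 ^ N ≤ cubeAvg g :=
  div_le_div_of_nonneg_right
    (Finset.single_le_sum (fun x _ => hg x) (Finset.mem_univ x₀)) (by positivity)

def cubeSpike (x₀ : Fin N → Bool) : (Fin N → Bool) → ℝ :=
  fun x => if x = x₀ then -1 else 1

lemma cubeSpike_eq_one_or_eq_neg_one (x₀ x : Fin N → Bool) :
    cubeSpike x₀ x = 1 ∨ cubeSpike x₀ x = -1 := by
  unfold cubeSpike; split_ifs <;> simp

lemma cubeAvg_cubeSpike (x₀ : Fin N → Bool) : cubeAvg (cubeSpike x₀) = 1 - 2 / 2 ^ N := by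
  unfold cubeSpike; rw [cubeAvg_ite_eq]; ring

lemma cubeAvg_cubeSpike_nonneg (hN : N ≠ 0) (x₀ : Fin N → Bool) :
    0 ≤ cubeAvg (cubeSpike x₀) := by
  rw [cubeAvg_cubeSpike, sub_nonneg, div_le_one (by positivity)]
  exact le_self_pow₀ one_le_two hN

lemma one_sub_abs_cubeAvg_cubeSpike (hN : N ≠ 0) (x₀ : Fin N → Bool) :
    1 - |cubeAvg (cubeSpike x₀)| = 2 / 2 ^ N := by
  rw [abs_of_nonneg (cubeAvg_cubeSpike_nonneg hN x₀), cubeAvg_cubeSpike]; ring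

lemma inv_two_pow_le_cubeAvg_abs_sub_cubeSpike_rpow (hN : N ≠ 0) (x₀ : Fin N → Bool)
    {p : ℝ} (hp : 0 ≤ p) :
    ((2 : ℝ) ^ N)⁻¹ ≤ cubeAvg (fun x => |cubeSpike x₀ x - cubeAvg (cubeSpike x₀)| ^ p) := by
  have hdev : 1 ≤ |cubeSpike x₀ x₀ - cubeAvg (cubeSpike x₀)| := by
    have hmean := cubeAvg_cubeSpike_nonneg hN x₀
    have hspike : cubeSpike x₀ x₀ = -1 := if_pos rfl
    rw [hspike, abs_sub_comm, abs_of_pos (by linarith)]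
    linarith
  calc ((2 : ℝ) ^ N)⁻¹ ≤ |cubeSpike x₀ x₀ - cubeAvg (cubeSpike x₀)| ^ p / 2 ^ N := by
        rw [inv_eq_one_div]
        gcongr
        exact Real.one_le_rpow hdev hp
    _ ≤ _ := div_two_pow_le_cubeAvg (g := fun x => |cubeSpike x₀ x - cubeAvg (cubeSpike x₀)| ^ p)
        (fun x => Real.rpow_nonneg (abs_nonneg _) p) x₀

end Cube

theorem stmt10_general (p γ : ℝ) (hp : 1 < p) :
    ∃ (N : ℕ) (f : (Fin N → Bool) → ℝ), (∀ x, f x = 1 ∨ f x = -1) ∧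
      γ * (1 - |cubeAvg f|) < (cubeAvg (fun x => |f x - cubeAvg f| ^ p)) ^ (1 / p) := by
  have hp0 : 0 < p := one_pos.trans hp
  obtain ⟨N, hN, hsmall⟩ := ((eventually_ne_atTop 0).and
    (tendsto_inv_two_pow_nhdsGT_zero.eventually
      (eventually_mul_lt_rpow_nhdsGT_zero ((div_lt_one hp0).2 hp) (2 * γ)))).exists
  let x₀ : Fin N → Bool := fun _ => false
  refine ⟨N, cubeSpike x₀, cubeSpike_eq_one_or_eq_neg_one x₀, ?_⟩
  calc γ * (1 - |cubeAvg (cubeSpike x₀)|) = 2 * γ * ((2 : ℝ) ^ N)⁻¹ := by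
        rw [one_sub_abs_cubeAvg_cubeSpike hN]; ring
    _ < (((2 : ℝ) ^ N)⁻¹) ^ (1 / p) := hsmall
    _ ≤ _ := Real.rpow_le_rpow (by positivity)
        (inv_two_pow_le_cubeAvg_abs_sub_cubeSpike_rpow hN x₀ hp0.le) (by positivity)

theorem stmt10 (p γ : ℝ) (hp : 1 < p) (hγ : 0 < γ) :
    ∃ (N : ℕ) (f : (Fin N → Bool) → ℝ), (∀ x, f x = 1 ∨ f x = -1) ∧
      γ * (1 - |cubeAvg f|) < (cubeAvg (fun x => |f x - cubeAvg f| ^ p)) ^ (1 / p) :=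
  stmt10_general p γ hp
end

section
/- For every d ≥ 1 there is a constant c_d > 0, independent of N, such that for every function f: {-1,1}^N → ℝ of degree at most d with ‖f‖_∞ ≤ 1, one has ∑_{S⊆[N]} |f̂(S)| (c_d/√N)^{|S|} ≤ 1. In particular the Boolean radius of the class of degree-≤d functions on {-1,1}^N is at least c_d/√N. -/
/-!
Write `a = f̂(∅)` and choose `σ = ±1` with `σ a = |a|`. Then `g = 1 - σ f` is nonnegative, has
degree at most `d` and mean `1 - |a|`, and its nonempty Fourier coefficients are `-σ f̂(S)`.
Bonami's inequality `E g⁴ ≤ 9^d (E g²)²` combined with the Hölder bound `(E g²)³ ≤ (E g)² E g⁴`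
(valid since `g ≥ 0`) gives `E g² ≤ 9^d (E g)²`, i.e. `∑_{S ≠ ∅} f̂(S)² ≤ 9^d (1 - |a|)²`.
By Cauchy–Schwarz, with `ρ = c/√N`,
`(∑_{S ≠ ∅} |f̂(S)| ρ^|S|)² ≤ 9^d (1 - |a|)² ((1 + c²/N)^N - 1) ≤ 9^d (1 - |a|)² (e^{c²} - 1)`,
and `c² = log (1 + 9^{-d})` makes the right-hand side `(1 - |a|)²`.
-/

open Finset Real

section Average

variable {N : ℕ}

lemma cubeAvg_add (f g : (Fin N → Bool) → ℝ) :
    cubeAvg (fun x => f x + g x) = cubeAvg f + cubeAvg g := by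
  simp only [cubeAvg, sum_add_distrib, add_div]

lemma cubeAvg_sub (f g : (Fin N → Bool) → ℝ) :
    cubeAvg (fun x => f x - g x) = cubeAvg f - cubeAvg g := by
  simp only [cubeAvg, sum_sub_distrib, sub_div]

lemma cubeAvg_const_mul (a : ℝ) (f : (Fin N → Bool) → ℝ) :
    cubeAvg (fun x => a * f x) = a * cubeAvg f := by
  simp only [cubeAvg, ← mul_sum, mul_div_assoc]

lemma cubeAvg_const (a : ℝ) : cubeAvg (fun _ : Fin N → Bool => a) = a := by
  simp [cubeAvg]

lemma cubeAvg_sum {ι : Type*} (s : Finset ι) (f : ι → (Fin N → Bool) → ℝ) :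
    cubeAvg (fun x => ∑ i ∈ s, f i x) = ∑ i ∈ s, cubeAvg (f i) := by
  simp only [cubeAvg, sum_div]
  exact sum_comm

lemma cubeAvg_nonneg {f : (Fin N → Bool) → ℝ} (hf : ∀ x, 0 ≤ f x) : 0 ≤ cubeAvg f :=
  div_nonneg (sum_nonneg fun x _ => hf x) (by positivity)

lemma cubeAvg_mul_sq_le (f g : (Fin N → Bool) → ℝ) :
    cubeAvg (fun x => f x * g x) ^ 2 ≤ cubeAvg (fun x => f x ^ 2) * cubeAvg (fun x => g x ^ 2) := by
  simp only [cubeAvg, div_pow, div_mul_div_comm, ← sq]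
  gcongr
  exact sum_mul_sq_le_sq_mul_sq _ _ _

lemma abs_le_cubeSup (f : (Fin N → Bool) → ℝ) (x : Fin N → Bool) : |f x| ≤ cubeSup f :=
  le_sup' (fun x => |f x|) (mem_univ x)

lemma cubeAvg_succ (F : (Fin (N + 1) → Bool) → ℝ) :
    cubeAvg F = cubeAvg (fun y => (F (Fin.cons true y) + F (Fin.cons false y)) / 2) := by
  rw [cubeAvg, cubeAvg, ← sum_div, div_div, pow_succ',
    ← (Fin.consEquiv fun _ => Bool).sum_comp F, Fintype.sum_prod_type_right]
  simp [Fin.consEquiv, add_comm]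

end Average

def walsh {N : ℕ} (S : Finset (Fin N)) (x : Fin N → Bool) : ℝ := ∏ i ∈ S, cubeChi (x i)

section Fourier

variable {N : ℕ}

@[simp]
lemma walsh_empty : walsh (∅ : Finset (Fin N)) = fun _ => 1 := by
  funext x; simp [walsh]

lemma wCoeff_eq_cubeAvg (f : (Fin N → Bool) → ℝ) (S : Finset (Fin N)) :
    wCoeff f S = cubeAvg (fun x => f x * walsh S x) := rfl

lemma wCoeff_empty (f : (Fin N → Bool) → ℝ) : wCoeff f ∅ = cubeAvg f := by
  simp [wCoeff_eq_cubeAvg]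

lemma cubeAvg_walsh (S : Finset (Fin N)) : cubeAvg (walsh S) = if S = ∅ then 1 else 0 := by
  rcases S.eq_empty_or_nonempty with rfl | ⟨i, hi⟩
  · rw [walsh_empty, cubeAvg_const, if_pos rfl]
  have hsum : ∑ x : Fin N → Bool, walsh S x
      = ∏ j, ∑ b : Bool, if j ∈ S then cubeChi b else 1 := by
    rw [prod_univ_sum, Fintype.piFinset_univ]
    simp only [walsh, prod_ite_mem, univ_inter]
  rw [cubeAvg, hsum, prod_eq_zero (mem_univ i) (by simp [hi, cubeChi]),
    if_neg (nonempty_iff_ne_empty.mp ⟨i, hi⟩), zero_div]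

lemma sum_walsh_mul_walsh (x y : Fin N → Bool) :
    ∑ S, walsh S x * walsh S y = if x = y then 2 ^ N else 0 := by
  simp only [walsh, ← prod_mul_distrib]
  rw [← powerset_univ, ← prod_add_one]
  split_ifs with hxy
  · subst hxy
    have (b : Bool) : cubeChi b * cubeChi b + 1 = 2 := by cases b <;> norm_num [cubeChi]
    simp [this]
  · obtain ⟨i, hi⟩ : ∃ i, x i ≠ y i := Function.ne_iff.mp hxy
    refine prod_eq_zero (mem_univ i) ?_
    revert hi; cases x i <;> cases y i <;> norm_num [cubeChi]

lemma sum_wCoeff_mul_walsh (f : (Fin N → Bool) → ℝ) (x : Fin N → Bool) :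
    ∑ S, wCoeff f S * walsh S x = f x := by
  simp only [wCoeff_eq_cubeAvg, cubeAvg, div_mul_eq_mul_div, ← sum_div, sum_mul]
  rw [sum_comm]
  simp only [mul_assoc, ← mul_sum, sum_walsh_mul_walsh, mul_ite, mul_zero, sum_ite_eq', mem_univ,
    if_true]
  field_simp

lemma sum_wCoeff_sq (f : (Fin N → Bool) → ℝ) :
    ∑ S, wCoeff f S ^ 2 = cubeAvg (fun x => f x ^ 2) := by
  calc ∑ S, wCoeff f S ^ 2 = cubeAvg (fun x => f x * ∑ S, wCoeff f S * walsh S x) := by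
        simp only [mul_sum, mul_left_comm (f _), cubeAvg_sum, cubeAvg_const_mul, sq]
        rfl
    _ = _ := by simp only [sum_wCoeff_mul_walsh, sq]

lemma wCoeff_const_sub_mul (a b : ℝ) (f : (Fin N → Bool) → ℝ) (S : Finset (Fin N)) :
    wCoeff (fun x => a - b * f x) S = (if S = ∅ then a else 0) - b * wCoeff f S := by
  simp only [wCoeff_eq_cubeAvg, sub_mul, mul_assoc, cubeAvg_sub, cubeAvg_const_mul]
  rw [cubeAvg_walsh]
  split_ifs <;> simp

lemma abs_wCoeff_le_cubeSup (f : (Fin N → Bool) → ℝ) (S : Finset (Fin N)) :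
    |wCoeff f S| ≤ cubeSup f := by
  have hwalsh (x : Fin N → Bool) : |walsh S x| = 1 := by
    simp only [walsh, abs_prod]
    exact prod_eq_one fun i _ => by cases x i <;> simp [cubeChi]
  rw [wCoeff_eq_cubeAvg, cubeAvg, abs_div, abs_of_pos (by positivity : (0 : ℝ) < 2 ^ N),
    div_le_iff₀ (by positivity)]
  calc |∑ x, f x * walsh S x| ≤ ∑ x, |f x * walsh S x| := abs_sum_le_sum_abs _ _
    _ ≤ ∑ _x : Fin N → Bool, cubeSup f := by
        gcongr with x; rw [abs_mul, hwalsh, mul_one]; exact abs_le_cubeSup f x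
    _ = cubeSup f * 2 ^ N := by simp [mul_comm]

end Fourier

def DegreeLE {N : ℕ} (f : (Fin N → Bool) → ℝ) (d : ℕ) : Prop :=
  ∀ S : Finset (Fin N), d < S.card → wCoeff f S = 0

noncomputable def firstAvg {N : ℕ} (f : (Fin (N + 1) → Bool) → ℝ) (y : Fin N → Bool) : ℝ :=
  (f (Fin.cons true y) + f (Fin.cons false y)) / 2

noncomputable def firstDeriv {N : ℕ} (f : (Fin (N + 1) → Bool) → ℝ) (y : Fin N → Bool) : ℝ :=
  (f (Fin.cons true y) - f (Fin.cons false y)) / 2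

section Degree

variable {N d : ℕ}

lemma walsh_map_succEmb_cons (T : Finset (Fin N)) (b : Bool) (y : Fin N → Bool) :
    walsh (T.map (Fin.succEmb N)) (Fin.cons b y) = walsh T y := by
  simp [walsh]

lemma walsh_insert_zero_map_succEmb_cons (T : Finset (Fin N)) (b : Bool) (y : Fin N → Bool) :
    walsh (insert 0 (T.map (Fin.succEmb N))) (Fin.cons b y) = cubeChi b * walsh T y := by
  simp [walsh]

lemma wCoeff_firstAvg (f : (Fin (N + 1) → Bool) → ℝ) (T : Finset (Fin N)) :
    wCoeff (firstAvg f) T = wCoeff f (T.map (Fin.succEmb N)) := by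
  rw [wCoeff_eq_cubeAvg, wCoeff_eq_cubeAvg, cubeAvg_succ]
  simp only [walsh_map_succEmb_cons, firstAvg]
  congr 1; funext y; ring

lemma wCoeff_firstDeriv (f : (Fin (N + 1) → Bool) → ℝ) (T : Finset (Fin N)) :
    wCoeff (firstDeriv f) T = wCoeff f (insert 0 (T.map (Fin.succEmb N))) := by
  rw [wCoeff_eq_cubeAvg, wCoeff_eq_cubeAvg, cubeAvg_succ]
  simp only [walsh_insert_zero_map_succEmb_cons, firstDeriv, cubeChi]
  congr 1; funext y; norm_num; ring

lemma DegreeLE.mono {f : (Fin N → Bool) → ℝ} {e : ℕ} (hf : DegreeLE f d) (hde : d ≤ e) :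
    DegreeLE f e :=
  fun S hS => hf S (hde.trans_lt hS)

lemma DegreeLE.firstAvg {f : (Fin (N + 1) → Bool) → ℝ} (hf : DegreeLE f d) :
    DegreeLE (firstAvg f) d := by
  intro T hT
  rw [wCoeff_firstAvg]
  exact hf _ (by rwa [card_map])

lemma DegreeLE.firstDeriv {f : (Fin (N + 1) → Bool) → ℝ} (hf : DegreeLE f (d + 1)) :
    DegreeLE (firstDeriv f) d := by
  intro T hT
  rw [wCoeff_firstDeriv]
  exact hf _ (by rw [card_insert_of_notMem (by simp), card_map]; omega)

lemma DegreeLE.eq_wCoeff_empty {f : (Fin N → Bool) → ℝ} (hf : DegreeLE f 0) (x : Fin N → Bool) :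
    f x = wCoeff f ∅ := by
  rw [← sum_wCoeff_mul_walsh f x, sum_eq_single ∅ (fun S _ hS => ?_) (by simp)]
  · simp
  · rw [hf S (card_pos.mpr (nonempty_iff_ne_empty.mpr hS)), zero_mul]

lemma degreeLE_zero_of_fin_zero (f : (Fin 0 → Bool) → ℝ) : DegreeLE f 0 := fun S hS => by
  simp [Finset.eq_empty_of_isEmpty S] at hS

end Degree

lemma bonami_step {G2 H2 G4 H4 M : ℝ} (d : ℕ) (hG2 : 0 ≤ G2) (hH2 : 0 ≤ H2) (hH4 : 0 ≤ H4)
    (hM : M ^ 2 ≤ G4 * H4) (hG : G4 ≤ 9 ^ (d + 1) * G2 ^ 2)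
    (hH : H4 ≤ 9 ^ d * H2 ^ 2) :
    G4 + 6 * M + H4 ≤ 9 ^ (d + 1) * (G2 + H2) ^ 2 := by
  set t : ℝ := 9 ^ d
  have ht : 0 ≤ t := by positivity
  have h9 : (9 : ℝ) ^ (d + 1) = 9 * t := pow_succ' 9 d
  rw [h9] at hG ⊢
  have hM' : M ≤ 3 * t * (G2 * H2) := by
    refine le_trans (le_abs_self M) (abs_le_of_sq_le_sq ?_ (by positivity))
    calc M ^ 2 ≤ G4 * H4 := hM
      _ ≤ (9 * t * G2 ^ 2) * (t * H2 ^ 2) := mul_le_mul hG hH hH4 (by positivity)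
      _ = (3 * t * (G2 * H2)) ^ 2 := by ring
  nlinarith [mul_nonneg ht (sq_nonneg H2)]

/-- Bonami's hypercontractive inequality. Splitting off the first coordinate,
`f (cons ±1 y) = g y ± h y` with `g = firstAvg f` of degree `≤ d + 1` and `h = firstDeriv f` of
degree `≤ d`, so `E f⁴ = E g⁴ + 6 E g²h² + E h⁴`, which `bonami_step` bounds. -/
theorem cubeAvg_pow_four_le (d : ℕ) :
    ∀ {N : ℕ} {f : (Fin N → Bool) → ℝ}, DegreeLE f d →
      cubeAvg (fun x => f x ^ 4) ≤ 9 ^ d * cubeAvg (fun x => f x ^ 2) ^ 2 := by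
  induction d with
  | zero =>
    intro N f hf
    simp only [hf.eq_wCoeff_empty, cubeAvg_const, pow_zero, one_mul, ← pow_mul]
    rfl
  | succ d ihd =>
    intro N f hf
    induction N with
    | zero =>
      calc _ ≤ 9 ^ d * cubeAvg (fun x => f x ^ 2) ^ 2 :=
            ihd ((degreeLE_zero_of_fin_zero f).mono (Nat.zero_le d))
        _ ≤ _ := by gcongr <;> norm_num
    | succ N ihN =>
      set g := firstAvg f
      set h := firstDeriv f
      have hsq : cubeAvg (fun x => f x ^ 2)
          = cubeAvg (fun y => g y ^ 2) + cubeAvg (fun y => h y ^ 2) := by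
        rw [cubeAvg_succ, ← cubeAvg_add]
        congr 1; funext y; simp only [g, h, firstAvg, firstDeriv]; ring
      have hfour : cubeAvg (fun x => f x ^ 4) = cubeAvg (fun y => g y ^ 4)
          + 6 * cubeAvg (fun y => g y ^ 2 * h y ^ 2) + cubeAvg (fun y => h y ^ 4) := by
        rw [cubeAvg_succ, ← cubeAvg_const_mul, ← cubeAvg_add, ← cubeAvg_add]
        congr 1; funext y; simp only [g, h, firstAvg, firstDeriv]; ring
      have hcs := cubeAvg_mul_sq_le (fun y => g y ^ 2) (fun y => h y ^ 2)
      simp only [← pow_mul] at hcs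
      rw [hsq, hfour]
      exact bonami_step d (cubeAvg_nonneg fun _ => by positivity)
        (cubeAvg_nonneg fun _ => by positivity)
        (cubeAvg_nonneg fun _ => by positivity) hcs
        (ihN hf.firstAvg) (ihd hf.firstDeriv)

lemma cubeAvg_sq_pow_three_le {N : ℕ} {g : (Fin N → Bool) → ℝ} (hg : ∀ x, 0 ≤ g x) :
    cubeAvg (fun x => g x ^ 2) ^ 3 ≤ cubeAvg g ^ 2 * cubeAvg (fun x => g x ^ 4) := by
  set P := cubeAvg g
  set Q := cubeAvg (fun x => g x ^ 2)
  set R := cubeAvg (fun x => g x ^ 3)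
  set F := cubeAvg (fun x => g x ^ 4)
  have hQR : Q ^ 2 ≤ P * R := by
    have h := cubeAvg_mul_sq_le (fun x => √(g x)) (fun x => √(g x) * g x)
    have e1 : (fun x => √(g x) * (√(g x) * g x)) = fun x => g x ^ 2 :=
      funext fun x => by rw [← mul_assoc, mul_self_sqrt (hg x), sq]
    have e2 : (fun x => √(g x) ^ 2) = g := funext fun x => sq_sqrt (hg x)
    have e3 : (fun x => (√(g x) * g x) ^ 2) = fun x => g x ^ 3 :=
      funext fun x => by rw [mul_pow, sq_sqrt (hg x)]; ring
    rwa [e1, e2, e3] at h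
  have hRF : R ^ 2 ≤ Q * F := by
    have := cubeAvg_mul_sq_le g (fun x => g x ^ 2)
    simpa only [← pow_succ', ← pow_mul] using this
  have hQ : 0 ≤ Q := cubeAvg_nonneg fun _ => sq_nonneg _
  rcases hQ.eq_or_lt with hQ0 | hQ0
  · rw [← hQ0]; simpa using mul_nonneg (sq_nonneg P) (cubeAvg_nonneg fun x => pow_nonneg (hg x) 4)
  refine le_of_mul_le_mul_left ?_ hQ0
  calc Q * Q ^ 3 = (Q ^ 2) ^ 2 := by ring
    _ ≤ (P * R) ^ 2 := pow_le_pow_left₀ (sq_nonneg Q) hQR 2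
    _ = P ^ 2 * R ^ 2 := mul_pow P R 2
    _ ≤ P ^ 2 * (Q * F) := by gcongr
    _ = Q * (P ^ 2 * F) := by ring

lemma cubeAvg_sq_le_of_nonneg {N d : ℕ} {g : (Fin N → Bool) → ℝ} (hdeg : DegreeLE g d)
    (hg : ∀ x, 0 ≤ g x) : cubeAvg (fun x => g x ^ 2) ≤ 9 ^ d * cubeAvg g ^ 2 := by
  set Q := cubeAvg (fun x => g x ^ 2)
  have hQ : 0 ≤ Q := cubeAvg_nonneg fun _ => sq_nonneg _
  rcases hQ.eq_or_lt with hQ0 | hQ0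
  · rw [← hQ0]; positivity
  refine le_of_mul_le_mul_right ?_ (pow_pos hQ0 2)
  calc Q * Q ^ 2 = Q ^ 3 := by ring
    _ ≤ cubeAvg g ^ 2 * cubeAvg (fun x => g x ^ 4) := cubeAvg_sq_pow_three_le hg
    _ ≤ cubeAvg g ^ 2 * (9 ^ d * Q ^ 2) := by gcongr; exact cubeAvg_pow_four_le d hdeg
    _ = 9 ^ d * cubeAvg g ^ 2 * Q ^ 2 := by ring

lemma sum_erase_empty_wCoeff_sq_le {N d : ℕ} {f : (Fin N → Bool) → ℝ} (hdeg : DegreeLE f d)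
    (hsup : cubeSup f ≤ 1) :
    ∑ S ∈ univ.erase ∅, wCoeff f S ^ 2 ≤ 9 ^ d * (1 - |wCoeff f ∅|) ^ 2 := by
  obtain ⟨σ, hσ, hσa⟩ : ∃ σ : ℝ, |σ| = 1 ∧ σ * wCoeff f ∅ = |wCoeff f ∅| := by
    rcases le_total 0 (wCoeff f ∅) with h | h
    · exact ⟨1, by simp, by simp [abs_of_nonneg h]⟩
    · exact ⟨-1, by simp, by simp [abs_of_nonpos h]⟩
  set g : (Fin N → Bool) → ℝ := fun x => 1 - σ * f x
  have hg (x : Fin N → Bool) : 0 ≤ g x := by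
    have h1 : |σ * f x| ≤ 1 := by rw [abs_mul, hσ, one_mul]; exact (abs_le_cubeSup f x).trans hsup
    have h2 := le_abs_self (σ * f x)
    simp only [g]; linarith
  have hgS (S : Finset (Fin N)) (hS : S ≠ ∅) : wCoeff g S ^ 2 = wCoeff f S ^ 2 := by
    rw [wCoeff_const_sub_mul, if_neg hS, zero_sub, neg_sq, mul_pow, ← sq_abs σ, hσ, one_pow,
      one_mul]
  have hgdeg : DegreeLE g d := fun S hS => by
    rw [wCoeff_const_sub_mul, if_neg (by rintro rfl; simp at hS), hdeg S hS, mul_zero, sub_zero]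
  have hgavg : cubeAvg g = 1 - |wCoeff f ∅| := by
    rw [← wCoeff_empty, wCoeff_const_sub_mul, if_pos rfl, hσa]
  calc ∑ S ∈ univ.erase ∅, wCoeff f S ^ 2 = ∑ S ∈ univ.erase ∅, wCoeff g S ^ 2 :=
        sum_congr rfl fun S hS => (hgS S (ne_of_mem_erase hS)).symm
    _ ≤ ∑ S, wCoeff g S ^ 2 := sum_le_univ_sum_of_nonneg fun _ => sq_nonneg _
    _ = cubeAvg (fun x => g x ^ 2) := sum_wCoeff_sq g
    _ ≤ 9 ^ d * (1 - |wCoeff f ∅|) ^ 2 := hgavg ▸ cubeAvg_sq_le_of_nonneg hgdeg hg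

lemma sum_pow_card_le_exp {ι : Type*} [Fintype ι] {x : ℝ} (hx : 0 ≤ x) :
    ∑ S : Finset ι, x ^ S.card ≤ exp (Fintype.card ι * x) := by
  calc ∑ S : Finset ι, x ^ S.card = (x + 1) ^ Fintype.card ι := by
        simpa using Fintype.sum_pow_mul_eq_add_pow ι x 1
    _ ≤ exp x ^ Fintype.card ι := by gcongr; exact add_one_le_exp x
    _ = exp (Fintype.card ι * x) := (exp_nat_mul x _).symm

lemma sq_sum_erase_empty_abs_mul_pow_card_le {ι : Type*} [Fintype ι] [DecidableEq ι]
    (u : Finset ι → ℝ) (c : ℝ) :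
    (∑ S ∈ univ.erase ∅, |u S| * (c / √(Fintype.card ι)) ^ S.card) ^ 2
      ≤ (∑ S ∈ univ.erase ∅, u S ^ 2) * (exp (c ^ 2) - 1) := by
  have hn : (0 : ℝ) ≤ Fintype.card ι := Nat.cast_nonneg _
  have hweights :
      ∑ S ∈ univ.erase (∅ : Finset ι), ((c / √(Fintype.card ι)) ^ S.card) ^ 2
        ≤ exp (c ^ 2) - 1 := by
    have hall := sum_pow_card_le_exp (ι := ι) (sq_nonneg (c / √(Fintype.card ι)))
    rw [← add_sum_erase _ _ (mem_univ ∅), card_empty, pow_zero] at hall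
    have hexp : exp (Fintype.card ι * (c / √(Fintype.card ι)) ^ 2) ≤ exp (c ^ 2) := by
      rw [div_pow, sq_sqrt hn, exp_le_exp]
      rcases hn.eq_or_lt with hn0 | hn0
      · simp [← hn0, sq_nonneg]
      · rw [mul_div_cancel₀ _ hn0.ne']
    simp only [pow_right_comm _ _ 2] at hall ⊢
    linarith
  calc _ ≤ (∑ S ∈ univ.erase ∅, |u S| ^ 2)
          * ∑ S ∈ univ.erase ∅, ((c / √(Fintype.card ι)) ^ S.card) ^ 2 :=
        sum_mul_sq_le_sq_mul_sq _ _ _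
    _ ≤ _ := by
        simp only [sq_abs]
        gcongr

theorem stmt12_general (d : ℕ) :
    ∃ c : ℝ, 0 < c ∧ ∀ (N : ℕ) (f : (Fin N → Bool) → ℝ),
      (∀ S : Finset (Fin N), d < S.card → wCoeff f S = 0) →
      cubeSup f ≤ 1 →
      ∑ S : Finset (Fin N), |wCoeff f S| * (c / Real.sqrt N) ^ S.card ≤ 1 := by
  set c : ℝ := √(log (1 + (9 ^ d)⁻¹))
  have h9 : (0 : ℝ) < (9 ^ d)⁻¹ := by positivity
  have hexp : exp (c ^ 2) - 1 = (9 ^ d)⁻¹ := by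
    rw [sq_sqrt (log_nonneg (by linarith)), exp_log (by linarith), add_sub_cancel_left]
  refine ⟨c, sqrt_pos.mpr (log_pos (by linarith)), fun N f hdeg hsup => ?_⟩
  set a := wCoeff f ∅
  have ha : |a| ≤ 1 := (abs_wCoeff_le_cubeSup f ∅).trans hsup
  have hcoeff := sum_erase_empty_wCoeff_sq_le hdeg hsup
  have hcs := sq_sum_erase_empty_abs_mul_pow_card_le (wCoeff f) c
  rw [Fintype.card_fin, hexp] at hcs
  have hrest : ∑ S ∈ univ.erase ∅, |wCoeff f S| * (c / √N) ^ S.card ≤ 1 - |a| := by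
    refine abs_le_of_sq_le_sq (hcs.trans ?_) (by linarith) |>.trans' (le_abs_self _)
    calc _ ≤ 9 ^ d * (1 - |a|) ^ 2 * (9 ^ d)⁻¹ := by gcongr
      _ = (1 - |a|) ^ 2 := by field_simp
  rw [← add_sum_erase _ _ (mem_univ ∅), card_empty, pow_zero, mul_one]
  linarith

theorem stmt12 (d : ℕ) (hd : 1 ≤ d) :
    ∃ c : ℝ, 0 < c ∧ ∀ (N : ℕ) (f : (Fin N → Bool) → ℝ),
      (∀ S : Finset (Fin N), d < S.card → wCoeff f S = 0) →
      cubeSup f ≤ 1 →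
      ∑ S : Finset (Fin N), |wCoeff f S| * (c / Real.sqrt N) ^ S.card ≤ 1 :=
  stmt12_general d
end

section
/- Let N ∈ ℕ, 0 ≤ α < N with N − α odd, and let ψ(x) = sign(x₁ + ⋯ + x_N − α) on {-1,1}^N. Then for every complex z, ∑_{n=1}^{N} binom(N−1, n−1) ψ̂([n]) z^{n−1} = binom(N−1, (N−α−1)/2) · 2^{1−N} · (1+z)^{(N+α−1)/2} (1−z)^{(N−α−1)/2}, where ψ̂([n]) denotes the common Fourier coefficient ψ̂(S) for any S with |S| = n. -/
/-!
By symmetry, ψ̂([k+1]) = ψ̂({0} ∪ T) for every `T ⊆ {1, …, N-1}` with `|T| = k`, so the left-hand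
side is `2⁻ᴺ ∑ₓ ψ(x) x₀ ∏_{i ≥ 1} (1 + z xᵢ)`. Summing over `x₀` first leaves the discrete
derivative `ψ(1, y) - ψ(-1, y)`; for the threshold function it is `2` exactly when
`y₁ + ⋯ + y_{N-1} = α` (the parity of `N - α` excludes the neighbouring value `α - 1`), and it
vanishes otherwise. On those `binom(N-1, (N+α-1)/2)` points the product is
`(1 + z)^((N+α-1)/2) (1 - z)^((N-α-1)/2)`.
-/

open Finset

@[simp] lemma cubeChi_true : cubeChi true = 1 := rfl

@[simp] lemma cubeChi_false : cubeChi false = -1 := rfl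

def CubeSymmetric {N : ℕ} (f : (Fin N → Bool) → ℝ) : Prop :=
  ∀ (σ : Equiv.Perm (Fin N)) (x : Fin N → Bool), f (x ∘ σ) = f x

section Fourier

variable {N : ℕ} {f : (Fin N → Bool) → ℝ}

lemma wCoeff_map_perm (hf : CubeSymmetric f) (σ : Equiv.Perm (Fin N)) (S : Finset (Fin N)) :
    wCoeff f (S.map σ.toEmbedding) = wCoeff f S := by
  unfold wCoeff
  congr 1
  refine Fintype.sum_equiv (σ.symm.arrowCongr (Equiv.refl Bool)) _ _ fun x => ?_
  have he : σ.symm.arrowCongr (Equiv.refl Bool) x = x ∘ σ := rfl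
  rw [he, hf σ x, prod_map]
  rfl

lemma wCoeff_eq_of_card_eq (hf : CubeSymmetric f) {S T : Finset (Fin N)} (h : #S = #T) :
    wCoeff f S = wCoeff f T := by
  obtain ⟨σ, rfl⟩ := Equiv.Perm.exists_map_finset_eq S T h
  exact (wCoeff_map_perm hf σ S).symm

lemma wCoeff_eq_wCoeff_filter_lt_card (hf : CubeSymmetric f) (S : Finset (Fin N)) :
    wCoeff f S = wCoeff f {i | (i : ℕ) < #S} := by
  refine wCoeff_eq_of_card_eq hf ?_
  rw [Fin.card_filter_val_lt, min_eq_right (card_le_univ S |>.trans_eq (Fintype.card_fin N))]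

lemma cubeSymmetric_of_eq_comp_sum (g : ℝ → ℝ) (hf : ∀ x, f x = g (∑ i, cubeChi (x i))) :
    CubeSymmetric f := fun σ x => by
  rw [hf, hf]
  exact congrArg g (Equiv.sum_comp σ fun i => cubeChi (x i))

end Fourier

section BoolFun

variable {M : ℕ}

lemma sum_fun_bool_eq_sum_choose {β : Type*} [AddCommMonoid β] (g : ℕ → β) :
    ∑ y : Fin M → Bool, g #{i | y i = true}
      = ∑ k ∈ range (M + 1), M.choose k • g k := by
  have h := sum_powerset_apply_card g (x := (univ : Finset (Fin M)))
  rw [card_univ, Fintype.card_fin] at h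
  rw [← h]
  exact sum_nbij' (fun y => univ.filter fun i => y i = true) (fun T i => decide (i ∈ T))
    (by simp) (by simp) (fun y _ => by ext; simp) (fun T _ => by ext; simp) (fun _ _ => rfl)

lemma card_filter_not_eq_true (y : Fin M → Bool) :
    #{i | ¬ y i = true} = M - #{i | y i = true} := by
  refine eq_tsub_of_add_eq ?_
  rw [add_comm, card_filter_add_card_filter_not, card_univ, Fintype.card_fin]

lemma sum_cubeChi (y : Fin M → Bool) :
    ∑ i, cubeChi (y i) = 2 * (#{i | y i = true} : ℝ) - M := by
  have hle : #{i | y i = true} ≤ M := (card_filter_le _ _).trans_eq (card_fin M)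
  simp only [cubeChi, sum_ite, sum_const, card_filter_not_eq_true, nsmul_eq_mul, Nat.cast_sub hle]
  ring

lemma prod_one_add_mul_cubeChi (y : Fin M → Bool) (z : ℂ) :
    ∏ i, (1 + z * cubeChi (y i))
      = (1 + z) ^ #{i | y i = true} * (1 - z) ^ (M - #{i | y i = true}) := by
  have hfac : ∀ i, 1 + z * cubeChi (y i) = if y i = true then 1 + z else 1 - z := fun i => by
    cases y i <;> simp [sub_eq_add_neg]
  simp only [hfac, prod_ite, prod_const, card_filter_not_eq_true]

end BoolFun

section GeneratingFunction

variable {M : ℕ} (f : (Fin (M + 1) → Bool) → ℝ) (z : ℂ)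

lemma sum_mul_cubeChi_zero_mul_prod_eq_sum_sub :
    ∑ x : Fin (M + 1) → Bool, (f x : ℂ) * cubeChi (x 0) * ∏ i : Fin M, (1 + z * cubeChi (x i.succ))
      = ∑ y : Fin M → Bool, ((f (Fin.cons true y) - f (Fin.cons false y) : ℝ) : ℂ) *
          ∏ i, (1 + z * cubeChi (y i)) := by
  rw [← (Fin.consEquiv fun _ => Bool).sum_comp, Fintype.sum_prod_type, Fintype.sum_bool,
    ← sum_add_distrib]
  refine sum_congr rfl fun y _ => ?_
  simp only [Fin.consEquiv, Equiv.coe_fn_mk, Fin.cons_zero, Fin.cons_succ, cubeChi_true,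
    cubeChi_false]
  push_cast
  ring

lemma sum_mul_cubeChi_zero_mul_prod_eq_sum_powerset :
    ∑ x : Fin (M + 1) → Bool, (f x : ℂ) * cubeChi (x 0) * ∏ i : Fin M, (1 + z * cubeChi (x i.succ))
      = 2 ^ (M + 1) * ∑ T ∈ (univ : Finset (Fin M)).powerset,
          (wCoeff f (insert 0 (T.map (Fin.succEmb M))) : ℂ) * z ^ #T := by
  have hexpand : ∀ x : Fin (M + 1) → Bool, ∏ i : Fin M, (1 + z * cubeChi (x i.succ))
      = ∑ T ∈ (univ : Finset (Fin M)).powerset, z ^ #T * ∏ i ∈ T, (cubeChi (x i.succ) : ℂ) :=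
    fun x => by simp only [prod_one_add, prod_mul_distrib, prod_const]
  have hcoeff : ∀ S : Finset (Fin (M + 1)),
      ∑ x : Fin (M + 1) → Bool, (f x : ℂ) * ∏ i ∈ S, (cubeChi (x i) : ℂ)
        = 2 ^ (M + 1) * wCoeff f S := fun S => by
    rw [wCoeff]
    push_cast
    field_simp
  simp_rw [hexpand, mul_sum]
  rw [sum_comm]
  refine sum_congr rfl fun T _ => ?_
  rw [← mul_assoc, ← hcoeff, sum_mul]
  refine sum_congr rfl fun x _ => ?_
  rw [prod_insert (by simp), prod_map]
  simp only [Fin.coe_succEmb]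
  ring

lemma sum_choose_mul_wCoeff_filter_lt_mul_pow (hf : CubeSymmetric f) :
    ∑ k ∈ range (M + 1), (M.choose k : ℂ) * (wCoeff f {i | (i : ℕ) < k + 1} : ℂ) * z ^ k
      = (∑ y : Fin M → Bool, ((f (Fin.cons true y) - f (Fin.cons false y) : ℝ) : ℂ) *
          ∏ i, (1 + z * cubeChi (y i))) / 2 ^ (M + 1) := by
  rw [← sum_mul_cubeChi_zero_mul_prod_eq_sum_sub, sum_mul_cubeChi_zero_mul_prod_eq_sum_powerset,
    mul_div_cancel_left₀ _ (pow_ne_zero _ two_ne_zero)]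
  have hcard : ∀ T : Finset (Fin M), #(insert 0 (T.map (Fin.succEmb M))) = #T + 1 := fun T => by
    rw [card_insert_of_notMem (by simp), card_map]
  simp_rw [wCoeff_eq_wCoeff_filter_lt_card hf (insert 0 _), hcard]
  rw [sum_powerset_apply_card (fun k => (wCoeff f {i | (i : ℕ) < k + 1} : ℂ) * z ^ k),
    card_univ, Fintype.card_fin]
  simp only [nsmul_eq_mul, mul_assoc]

end GeneratingFunction

lemma threshold_cons_true_sub_cons_false {M α : ℕ} (hpar : Even (M + α))
    {ψ : (Fin (M + 1) → Bool) → ℝ}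
    (hψ : ∀ x, ψ x = if (α : ℝ) ≤ ∑ i, cubeChi (x i) then 1 else -1) (y : Fin M → Bool) :
    ψ (Fin.cons true y) - ψ (Fin.cons false y)
      = if 2 * #{i | y i = true} = M + α then 2 else 0 := by
  obtain ⟨c, hc⟩ := hpar
  simp only [hψ, Fin.sum_univ_succ, Fin.cons_zero, Fin.cons_succ, sum_cubeChi, cubeChi_true,
    cubeChi_false]
  set k := #{i | y i = true}
  have hup : (α : ℝ) ≤ 1 + (2 * k - M) ↔ c ≤ k := by
    have : (α : ℝ) ≤ 1 + (2 * k - M) ↔ ((α + M : ℕ) : ℝ) ≤ ((1 + 2 * k : ℕ) : ℝ) := by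
      push_cast
      constructor <;> intro h <;> linarith
    rw [this, Nat.cast_le]
    omega
  have hlow : (α : ℝ) ≤ -1 + (2 * k - M) ↔ c < k := by
    have : (α : ℝ) ≤ -1 + (2 * k - M) ↔ ((α + M + 1 : ℕ) : ℝ) ≤ ((2 * k : ℕ) : ℝ) := by
      push_cast
      constructor <;> intro h <;> linarith
    rw [this, Nat.cast_le]
    omega
  simp only [hup, hlow]
  split_ifs <;> first | omega | norm_num

theorem stmt15_general {N α : ℕ} (hodd : Odd (N - α))
    (ψ : (Fin N → Bool) → ℝ)
    (hψ : ∀ x, ψ x = if (α : ℝ) ≤ ∑ i, cubeChi (x i) then 1 else -1) :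
    ∀ z : ℂ,
      ∑ n ∈ Finset.Icc 1 N, ((N - 1).choose (n - 1) : ℂ) *
          ((wCoeff ψ (Finset.univ.filter (fun i : Fin N => (i : ℕ) < n)) : ℝ) : ℂ) *
          z ^ (n - 1) =
        ((N - 1).choose ((N - α - 1) / 2) : ℂ) * (2 / 2 ^ N) *
          (1 + z) ^ ((N + α - 1) / 2) * (1 - z) ^ ((N - α - 1) / 2) := by
  intro z
  obtain ⟨c, hc⟩ := hodd
  obtain ⟨M, rfl⟩ : ∃ M, N = M + 1 := ⟨N - 1, by omega⟩
  have hpar : Even (M + α) := ⟨α + c, by omega⟩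
  rw [show (M + 1 + α - 1) / 2 = α + c by omega, show (M + 1 - α - 1) / 2 = c by omega,
    Nat.add_sub_cancel, ← Ico_add_one_right_eq_Icc, sum_Ico_eq_sum_range, Nat.add_sub_cancel]
  simp only [add_comm 1, Nat.add_sub_cancel]
  have hsymm : CubeSymmetric ψ :=
    cubeSymmetric_of_eq_comp_sum (fun s => if (α : ℝ) ≤ s then 1 else -1) hψ
  rw [sum_choose_mul_wCoeff_filter_lt_mul_pow ψ z hsymm]
  simp_rw [threshold_cons_true_sub_cons_false hpar hψ, prod_one_add_mul_cubeChi]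
  rw [sum_fun_bool_eq_sum_choose (fun k => ((if 2 * k = M + α then 2 else 0 : ℝ) : ℂ) *
    ((1 + z) ^ k * (1 - z) ^ (M - k))), sum_eq_single (α + c)]
  · rw [if_pos (by omega), Nat.choose_symm_of_eq_add (by omega : M = α + c + c),
      show M - (α + c) = c by omega]
    push_cast
    ring
  · intro k _ hk
    rw [if_neg (by omega)]
    simp
  · intro hK
    exact absurd (mem_range.mpr (by omega)) hK

theorem stmt15 {N α : ℕ} (hα : α < N) (hodd : Odd (N - α))
    (ψ : (Fin N → Bool) → ℝ)
    (hψ : ∀ x, ψ x = if (α : ℝ) ≤ ∑ i, cubeChi (x i) then 1 else -1) :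
    ∀ z : ℂ,
      ∑ n ∈ Finset.Icc 1 N, ((N - 1).choose (n - 1) : ℂ) *
          ((wCoeff ψ (Finset.univ.filter (fun i : Fin N => (i : ℕ) < n)) : ℝ) : ℂ) *
          z ^ (n - 1) =
        ((N - 1).choose ((N - α - 1) / 2) : ℂ) * (2 / 2 ^ N) *
          (1 + z) ^ ((N + α - 1) / 2) * (1 - z) ^ ((N - α - 1) / 2) :=
  stmt15_general hodd ψ hψ
end

section
/- For 0 ≤ α ≤ N−1, define G(r) = sup_{z∈𝕋} |1+zr|^{(N+α−1)/2}|1−zr|^{(N−α−1)/2} for r ∈ [0,1], and set r_α = α/((N−1)+√((N−1)²−α²)). Then G(r) = (1+r)^{(N+α−1)/2}(1−r)^{(N−α−1)/2} for r ∈ [0, r_α], and G(r) = (1+r²)^{(N−1)/2} (1+α/(N−1))^{(N+α−1)/4} (1−α/(N−1))^{(N−α−1)/4} for r ∈ [r_α, 1]. -/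
noncomputable def Gfun (N α : ℕ) (r : ℝ) : ℝ :=
  ⨆ z : Metric.sphere (0 : ℂ) 1,
    ‖1 + (z : ℂ) * r‖ ^ (((N : ℝ) + α - 1) / 2) *
      ‖1 - (z : ℂ) * r‖ ^ (((N : ℝ) - α - 1) / 2)

noncomputable def ralpha (N α : ℕ) : ℝ :=
  α / (((N : ℝ) - 1) + Real.sqrt (((N : ℝ) - 1) ^ 2 - (α : ℝ) ^ 2))

/-!
Writing `c = Re z`, one has `|1 ± z r|² = 1 + r² ± 2 r c`, so `G(r)` is the maximum over
`u = 2 r c ∈ [-2r, 2r]` of `φ(u) = (s + u) ^ p * (s - u) ^ q`, where `s = 1 + r²`,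
`p = (N + α - 1) / 4` and `q = (N - α - 1) / 4`. The function `φ` is log-concave with critical
point `u* = s α / (N - 1)`, and `u* ≥ 2r` exactly when `α r² - 2 (N - 1) r + α ≥ 0`, i.e. when
`r ≤ r_α`, the smaller root of that quadratic. So for `r ≤ r_α` the maximum is attained at the
endpoint `u = 2r`, and for `r ≥ r_α` at `u*`.
-/

open Set Real

theorem rpow_le_rpow_mul_exp {x y p : ℝ} (hx : 0 ≤ x) (hy : 0 < y) (hp : 0 ≤ p) :
    x ^ p ≤ y ^ p * exp (p * (x / y - 1)) := by
  have hxy : x ≤ y * exp (x / y - 1) := by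
    calc x = y * (x / y - 1 + 1) := by field_simp; ring
      _ ≤ y * exp (x / y - 1) := by gcongr; exact add_one_le_exp _
  calc x ^ p ≤ (y * exp (x / y - 1)) ^ p := by gcongr
    _ = y ^ p * exp (p * (x / y - 1)) := by
      rw [mul_rpow hy.le (exp_pos _).le, ← exp_mul, mul_comm (x / y - 1)]

theorem rpow_mul_rpow_le_rpow_mul_rpow {a b a' b' p q : ℝ} (ha : 0 ≤ a) (hb : 0 ≤ b)
    (ha' : 0 < a') (hb' : 0 < b') (hp : 0 ≤ p) (hq : 0 ≤ q)
    (h : p * (a / a') + q * (b / b') ≤ p + q) :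
    a ^ p * b ^ q ≤ a' ^ p * b' ^ q := by
  calc a ^ p * b ^ q
      ≤ (a' ^ p * exp (p * (a / a' - 1))) * (b' ^ q * exp (q * (b / b' - 1))) :=
        mul_le_mul (rpow_le_rpow_mul_exp ha ha' hp) (rpow_le_rpow_mul_exp hb hb' hq)
          (by positivity) (by positivity)
    _ = a' ^ p * b' ^ q * exp (p * (a / a') + q * (b / b') - (p + q)) := by
        rw [mul_mul_mul_comm, ← exp_add]; ring_nf
    _ ≤ a' ^ p * b' ^ q := by
        apply mul_le_of_le_one_right (by positivity)
        rw [exp_le_one_iff]; linarith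

-- `p * (s - v) - q * (s + v)` is `s² - v²` times the logarithmic derivative of the profile at `v`.
theorem add_rpow_mul_sub_rpow_le {s u v p q : ℝ} (hp : 0 ≤ p) (hq : 0 ≤ q)
    (hu : |u| ≤ s) (hv : |v| < s) (h : (u - v) * (p * (s - v) - q * (s + v)) ≤ 0) :
    (s + u) ^ p * (s - u) ^ q ≤ (s + v) ^ p * (s - v) ^ q := by
  obtain ⟨hu₁, hu₂⟩ := abs_le.1 hu
  obtain ⟨hv₁, hv₂⟩ := abs_lt.1 hv
  have hsv₁ : 0 < s + v := by linarith
  have hsv₂ : 0 < s - v := by linarith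
  refine rpow_mul_rpow_le_rpow_mul_rpow (by linarith) (by linarith) hsv₁ hsv₂ hp hq ?_
  have key : p * ((s + u) / (s + v)) + q * ((s - u) / (s - v)) - (p + q)
      = (u - v) * (p * (s - v) - q * (s + v)) / ((s + v) * (s - v)) := by
    field_simp; ring
  have : (u - v) * (p * (s - v) - q * (s + v)) / ((s + v) * (s - v)) ≤ 0 :=
    div_nonpos_of_nonpos_of_nonneg h (by positivity)
  linarith

theorem Complex.norm_one_add_mul_ofReal_sq {z : ℂ} (hz : ‖z‖ = 1) (r : ℝ) :
    ‖1 + z * r‖ ^ 2 = 1 + r ^ 2 + 2 * r * z.re := by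
  have hz2 : z.re ^ 2 + z.im ^ 2 = 1 := by
    have h := Complex.sq_norm z
    rw [hz, Complex.normSq_apply] at h
    linear_combination -h
  rw [Complex.sq_norm, Complex.normSq_apply]
  simp only [add_re, add_im, mul_re, mul_im, ofReal_re, ofReal_im, one_re, one_im]
  linear_combination r ^ 2 * hz2

theorem Complex.norm_one_sub_mul_ofReal_sq {z : ℂ} (hz : ‖z‖ = 1) (r : ℝ) :
    ‖1 - z * r‖ ^ 2 = 1 + r ^ 2 - 2 * r * z.re := by
  have h := norm_one_add_mul_ofReal_sq (z := -z) (by rwa [norm_neg]) r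
  rw [neg_mul, ← sub_eq_add_neg, neg_re] at h
  linarith

theorem Complex.exists_norm_eq_one_re_eq {c : ℝ} (hc : c ∈ Icc (-1) 1) :
    ∃ z : ℂ, ‖z‖ = 1 ∧ z.re = c := by
  have h : 0 ≤ 1 - c ^ 2 := by nlinarith [hc.1, hc.2]
  refine ⟨⟨c, √(1 - c ^ 2)⟩, ?_, rfl⟩
  rw [norm_def, normSq_mk, ← sq, ← sq, sq_sqrt h, add_sub_cancel, Real.sqrt_one]

noncomputable def gProfile (N α : ℕ) (r u : ℝ) : ℝ :=
  (1 + r ^ 2 + u) ^ (((N : ℝ) + α - 1) / 4) * (1 + r ^ 2 - u) ^ (((N : ℝ) - α - 1) / 4)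

theorem rpow_eq_sq_rpow_half {t : ℝ} (ht : 0 ≤ t) (e : ℝ) : t ^ e = (t ^ 2) ^ (e / 2) := by
  rw [← rpow_natCast_mul ht]; push_cast; ring_nf

theorem Gfun_term_eq_gProfile (N α : ℕ) {z : ℂ} (hz : ‖z‖ = 1) (r : ℝ) :
    ‖1 + z * r‖ ^ (((N : ℝ) + α - 1) / 2) * ‖1 - z * r‖ ^ (((N : ℝ) - α - 1) / 2)
      = gProfile N α r (2 * r * z.re) := by
  rw [rpow_eq_sq_rpow_half (norm_nonneg _), rpow_eq_sq_rpow_half (norm_nonneg (1 - z * r)),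
    Complex.norm_one_add_mul_ofReal_sq hz, Complex.norm_one_sub_mul_ofReal_sq hz, gProfile]
  ring_nf

theorem Gfun_eq_of_isMaxOn {N α : ℕ} {r c₀ : ℝ} (hc₀ : c₀ ∈ Icc (-1) 1)
    (hmax : IsMaxOn (fun c => gProfile N α r (2 * r * c)) (Icc (-1) 1) c₀) :
    Gfun N α r = gProfile N α r (2 * r * c₀) := by
  refine IsGreatest.csSup_eq ⟨?_, ?_⟩
  · obtain ⟨z, hz, rfl⟩ := Complex.exists_norm_eq_one_re_eq hc₀
    exact ⟨⟨z, mem_sphere_zero_iff_norm.2 hz⟩, Gfun_term_eq_gProfile N α hz r⟩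
  · rintro _ ⟨⟨z, hz⟩, rfl⟩
    rw [mem_sphere_zero_iff_norm] at hz
    have hre : z.re ∈ Icc (-1) 1 := abs_le.1 (hz ▸ Complex.abs_re_le_norm z)
    exact (Gfun_term_eq_gProfile N α hz r).trans_le (hmax hre)

theorem abs_two_mul_mul_le_one_add_sq {r c : ℝ} (hc : c ∈ Icc (-1) 1) :
    |2 * r * c| ≤ 1 + r ^ 2 := by
  obtain ⟨hc₁, hc₂⟩ := hc
  rw [abs_le]
  constructor <;> nlinarith [sq_nonneg (1 - r), sq_nonneg (1 + r)]

theorem isMaxOn_gProfile_one {N α : ℕ} {r : ℝ} (hα : (α : ℝ) ≤ N - 1) (hr0 : 0 ≤ r)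
    (hr1 : r ≤ 1) (h : 2 * ((N : ℝ) - 1) * r ≤ α * (1 + r ^ 2)) :
    IsMaxOn (fun c => gProfile N α r (2 * r * c)) (Icc (-1) 1) 1 := by
  refine isMaxOn_iff.2 fun c hc => ?_
  have ⟨hc₁, hc₂⟩ := hc
  simp only [mul_one, gProfile]
  have hα0 : (0 : ℝ) ≤ α := Nat.cast_nonneg α
  rcases hr1.lt_or_eq with hr1 | rfl
  · refine add_rpow_mul_sub_rpow_le (by linarith) (by linarith)
      (abs_two_mul_mul_le_one_add_sq hc) ?_ ?_
    · rw [abs_lt]; constructor <;> nlinarith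
    · refine mul_nonpos_of_nonpos_of_nonneg (by nlinarith) ?_
      linarith
  · have hq : ((N : ℝ) - α - 1) / 4 = 0 := by linarith
    simp only [hq, rpow_zero, mul_one]
    exact rpow_le_rpow (by linarith) (by linarith) (by linarith)

theorem isMaxOn_gProfile_of_critical {N α : ℕ} {r c₀ : ℝ} (hN : 0 < (N : ℝ) - 1)
    (hα : (α : ℝ) ≤ N - 1) (hr0 : 0 ≤ r) (hc₀ : c₀ ∈ Icc (-1) 1)
    (hcrit : 2 * r * c₀ * ((N : ℝ) - 1) = α * (1 + r ^ 2)) :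
    IsMaxOn (fun c => gProfile N α r (2 * r * c)) (Icc (-1) 1) c₀ := by
  have hα0 : (0 : ℝ) ≤ α := Nat.cast_nonneg α
  obtain ⟨hc₁, hc₂⟩ := hc₀
  rcases hα.lt_or_eq with hlt | heq
  · refine isMaxOn_iff.2 fun c hc => ?_
    refine add_rpow_mul_sub_rpow_le (by linarith) (by linarith)
      (abs_two_mul_mul_le_one_add_sq hc) ?_ ?_
    · have hv : 0 ≤ 2 * r * c₀ := by nlinarith
      rw [abs_lt]; constructor <;> nlinarith
    · have : ((N : ℝ) + α - 1) / 4 * (1 + r ^ 2 - 2 * r * c₀)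
          - ((N : ℝ) - α - 1) / 4 * (1 + r ^ 2 + 2 * r * c₀) = 0 := by
        linear_combination -hcrit / 2
      rw [this, mul_zero]
  · have hv : 2 * r * c₀ = 1 + r ^ 2 :=
      mul_right_cancel₀ hN.ne' (hcrit.trans (by rw [heq]; ring))
    have hr : (1 - r) ^ 2 = 0 := by nlinarith [sq_nonneg (1 - r)]
    obtain rfl : r = 1 := by linarith [pow_eq_zero_iff (n := 2) two_ne_zero |>.1 hr]
    obtain rfl : c₀ = 1 := by linarith
    exact isMaxOn_gProfile_one hα zero_le_one le_rfl (by nlinarith)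

theorem exists_gProfile_critical {N α : ℕ} {r : ℝ}
    (h : α * (1 + r ^ 2) ≤ 2 * ((N : ℝ) - 1) * r) :
    ∃ c₀ ∈ Icc (-1 : ℝ) 1, 2 * r * c₀ * ((N : ℝ) - 1) = α * (1 + r ^ 2) := by
  have hmem : (α : ℝ) * (1 + r ^ 2) ∈ Icc (2 * r * 0 * ((N : ℝ) - 1)) (2 * r * 1 * ((N : ℝ) - 1)) :=
    ⟨by simp only [mul_zero, zero_mul]; positivity, by linarith⟩
  obtain ⟨c₀, hc₀, hcrit⟩ := intermediate_value_Icc zero_le_one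
    (f := fun c : ℝ => 2 * r * c * ((N : ℝ) - 1)) (by fun_prop) hmem
  exact ⟨c₀, ⟨by linarith [hc₀.1], hc₀.2⟩, hcrit⟩

-- `a / (n + √(n² - a²))` and `(n + √(n² - a²)) / a` are the two roots of `a x² - 2 n x + a`.
theorem add_sqrt_mul_quadratic_eq {n a : ℝ} (h : a ^ 2 ≤ n ^ 2) (r : ℝ) :
    (n + √(n ^ 2 - a ^ 2)) * (a * (1 + r ^ 2) - 2 * n * r)
      = ((n + √(n ^ 2 - a ^ 2)) * r - a) * (a * r - (n + √(n ^ 2 - a ^ 2))) := by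
  linear_combination r * sq_sqrt (sub_nonneg.2 h)

theorem ralpha_nonneg {N α : ℕ} (hN : 0 ≤ (N : ℝ) - 1) : 0 ≤ ralpha N α :=
  div_nonneg (Nat.cast_nonneg α) (by positivity)

theorem ralpha_le_one {N α : ℕ} (hα : (α : ℝ) ≤ N - 1) : ralpha N α ≤ 1 :=
  div_le_one_of_le₀ (le_add_of_le_of_nonneg hα (sqrt_nonneg _))
    (add_nonneg ((Nat.cast_nonneg α).trans hα) (sqrt_nonneg _))

theorem two_mul_le_of_le_ralpha {N α : ℕ} {r : ℝ} (hN : 0 < (N : ℝ) - 1) (hα : (α : ℝ) ≤ N - 1)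
    (hr1 : r ≤ 1) (hr : r ≤ ralpha N α) : 2 * ((N : ℝ) - 1) * r ≤ α * (1 + r ^ 2) := by
  have hα0 : (0 : ℝ) ≤ α := Nat.cast_nonneg α
  have hsq : (α : ℝ) ^ 2 ≤ ((N : ℝ) - 1) ^ 2 := pow_le_pow_left₀ hα0 hα 2
  have hS := sqrt_nonneg (((N : ℝ) - 1) ^ 2 - (α : ℝ) ^ 2)
  rw [ralpha, le_div_iff₀ (by positivity)] at hr
  nlinarith [add_sqrt_mul_quadratic_eq hsq r, mul_le_mul_of_nonneg_left hr1 hα0]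

theorem le_two_mul_of_ralpha_le {N α : ℕ} {r : ℝ} (hN : 0 < (N : ℝ) - 1) (hα : (α : ℝ) ≤ N - 1)
    (hr1 : r ≤ 1) (hr : ralpha N α ≤ r) : α * (1 + r ^ 2) ≤ 2 * ((N : ℝ) - 1) * r := by
  have hα0 : (0 : ℝ) ≤ α := Nat.cast_nonneg α
  have hsq : (α : ℝ) ^ 2 ≤ ((N : ℝ) - 1) ^ 2 := pow_le_pow_left₀ hα0 hα 2
  have hS := sqrt_nonneg (((N : ℝ) - 1) ^ 2 - (α : ℝ) ^ 2)
  rw [ralpha, div_le_iff₀ (by positivity)] at hr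
  nlinarith [add_sqrt_mul_quadratic_eq hsq r, mul_le_mul_of_nonneg_left hr1 hα0]

theorem gProfile_two_mul {N α : ℕ} {r : ℝ} (hr0 : 0 ≤ r) (hr1 : r ≤ 1) :
    gProfile N α r (2 * r) =
      (1 + r) ^ (((N : ℝ) + α - 1) / 2) * (1 - r) ^ (((N : ℝ) - α - 1) / 2) := by
  rw [gProfile, show 1 + r ^ 2 + 2 * r = (1 + r) ^ 2 by ring,
    show 1 + r ^ 2 - 2 * r = (1 - r) ^ 2 by ring, rpow_eq_sq_rpow_half (by linarith : 0 ≤ 1 + r),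
    rpow_eq_sq_rpow_half (by linarith : 0 ≤ 1 - r)]
  ring_nf

theorem gProfile_of_critical {N α : ℕ} {r v : ℝ} (hN : 0 < (N : ℝ) - 1) (hα : (α : ℝ) ≤ N - 1)
    (hv : v * ((N : ℝ) - 1) = α * (1 + r ^ 2)) :
    gProfile N α r v = (1 + r ^ 2) ^ (((N : ℝ) - 1) / 2) *
        (1 + (α : ℝ) / ((N : ℝ) - 1)) ^ (((N : ℝ) + α - 1) / 4) *
        (1 - (α : ℝ) / ((N : ℝ) - 1)) ^ (((N : ℝ) - α - 1) / 4) := by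
  have hs : 0 < 1 + r ^ 2 := by positivity
  have hv' : v = (1 + r ^ 2) * (α / ((N : ℝ) - 1)) := by
    rw [mul_div_assoc', eq_div_iff hN.ne', hv, mul_comm]
  have hq : 0 ≤ 1 - (α : ℝ) / ((N : ℝ) - 1) := by
    rw [sub_nonneg, div_le_one hN]; exact hα
  have he : ((N : ℝ) - 1) / 2 = ((N : ℝ) + α - 1) / 4 + ((N : ℝ) - α - 1) / 4 := by ring
  rw [gProfile, hv', ← mul_one_add, ← mul_one_sub, mul_rpow hs.le (by positivity),
    mul_rpow hs.le hq, he, rpow_add hs]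
  ring

theorem stmt17 {N α : ℕ} (hN : 1 ≤ N) (hα : α ≤ N - 1) :
    (∀ r ∈ Set.Icc (0 : ℝ) (ralpha N α),
      Gfun N α r = (1 + r) ^ (((N : ℝ) + α - 1) / 2) * (1 - r) ^ (((N : ℝ) - α - 1) / 2)) ∧
    (∀ r ∈ Set.Icc (ralpha N α) (1 : ℝ),
      Gfun N α r = (1 + r ^ 2) ^ (((N : ℝ) - 1) / 2) *
        (1 + (α : ℝ) / ((N : ℝ) - 1)) ^ (((N : ℝ) + α - 1) / 4) *
        (1 - (α : ℝ) / ((N : ℝ) - 1)) ^ (((N : ℝ) - α - 1) / 4)) := by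
  obtain rfl | hN2 : N = 1 ∨ 2 ≤ N := by omega
  · obtain rfl : α = 0 := by omega
    norm_num [Gfun]
  have hN' : 0 < (N : ℝ) - 1 := by
    rw [sub_pos]; exact_mod_cast hN2
  have hαN : (α : ℝ) ≤ N - 1 := by
    rw [le_sub_iff_add_le]; exact_mod_cast (by omega : α + 1 ≤ N)
  refine ⟨fun r ⟨hr0, hr⟩ => ?_, fun r ⟨hr, hr1⟩ => ?_⟩
  · have hr1 := hr.trans (ralpha_le_one hαN)
    have hmax := isMaxOn_gProfile_one hαN hr0 hr1 (two_mul_le_of_le_ralpha hN' hαN hr1 hr)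
    rw [Gfun_eq_of_isMaxOn ⟨by norm_num, le_rfl⟩ hmax, mul_one, gProfile_two_mul hr0 hr1]
  · have hr0 := (ralpha_nonneg hN'.le).trans hr
    obtain ⟨c₀, hc₀, hcrit⟩ := exists_gProfile_critical (le_two_mul_of_ralpha_le hN' hαN hr1 hr)
    rw [Gfun_eq_of_isMaxOn hc₀ (isMaxOn_gProfile_of_critical hN' hαN hr0 hc₀ hcrit),
      gProfile_of_critical hN' hαN hcrit]
end
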